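/- If a and a' are compositions and s is a positive integer such that (a,s) and (a',s) are dominating equivalent, then a and a' are dominating equivalent. -/

import Mathlib

/-!
Every list `b` dominating `a` splits uniquely as `b = p ++ r` with `p` the shortest prefix of `b`
dominating `a`, and `b` dominates `a ++ t` exactly when `r` dominates `t`. Counting by this split,
`|D_n(a ++ t)| = ∑_{i + j = n} m_a(i) |D_j(t)|`, where `m_a(i)` counts the compositions of `i`
that dominate `a` while none of their proper prefixes does. For `t = [s]` the factor `|D_j([s])|`
vanishes for `j < s` and is positive at `j = s`, so the numbers `|D_n(a, s)|` determine `m_a`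
recursively; the case `t = []` then expresses `|D_n(a)|` through `m_a`.
-/

/-- `l` is a composition of `n`: a list of positive integers summing to `n`. -/
def IsComposition (n : ℕ) (l : List ℕ) : Prop :=
  (∀ x ∈ l, 0 < x) ∧ l.sum = n

/-- `b` dominates `a`: `b` has a subsequence whose terms are entrywise at least those of `a`. -/
def Dominates (b a : List ℕ) : Prop :=
  ∃ b' : List ℕ, b'.Sublist b ∧ List.Forall₂ (· ≤ ·) a b'

/-- `D_n(a)`: the set of compositions of `n` dominating `a`. -/
def domSet (n : ℕ) (a : List ℕ) : Set (List ℕ) :=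
  {b | IsComposition n b ∧ Dominates b a}

open Finset

def MinimallyDominates (p a : List ℕ) : Prop :=
  Dominates p a ∧ ∀ q, q <+: p → Dominates q a → q = p

def minDomSet (n : ℕ) (a : List ℕ) : Set (List ℕ) :=
  {p | IsComposition n p ∧ MinimallyDominates p a}

section Dominates

variable {a b t : List ℕ}

theorem dominates_self (a : List ℕ) : Dominates a a :=
  ⟨a, .refl a, List.forall₂_refl a⟩

theorem dominates_singleton_iff {s : ℕ} : Dominates b [s] ↔ ∃ y ∈ b, s ≤ y := by
  simp [Dominates, List.forall₂_cons_left_iff]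

theorem Dominates.mono {c : List ℕ} (h : Dominates b a) (hbc : b.Sublist c) : Dominates c a :=
  let ⟨b', hb', hf⟩ := h
  ⟨b', hb'.trans hbc, hf⟩

theorem Dominates.append {r : List ℕ} (hb : Dominates b a) (hr : Dominates r t) :
    Dominates (b ++ r) (a ++ t) :=
  let ⟨b', hb', hf⟩ := hb
  let ⟨r', hr', hf'⟩ := hr
  ⟨b' ++ r', hb'.append hr', List.rel_append hf hf'⟩

theorem Dominates.exists_append_eq (h : Dominates b (a ++ t)) :
    ∃ b₁ b₂, b = b₁ ++ b₂ ∧ Dominates b₁ a ∧ Dominates b₂ t := by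
  obtain ⟨c, hc, hf⟩ := h
  rw [← List.take_append_drop a.length c] at hc
  obtain ⟨b₁, b₂, rfl, h₁, h₂⟩ := List.append_sublist_iff.1 hc
  refine ⟨b₁, b₂, rfl, ⟨_, h₁, ?_⟩, ⟨_, h₂, ?_⟩⟩
  · simpa using List.forall₂_take a.length hf
  · simpa using List.forall₂_drop a.length hf

theorem MinimallyDominates.eq_of_append_eq {p p' r r' : List ℕ} (hp : MinimallyDominates p a)
    (hp' : MinimallyDominates p' a) (h : p ++ r = p' ++ r') : p = p' := by
  have hp'b : p' <+: p ++ r := h ▸ List.prefix_append p' r'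
  rcases List.prefix_or_prefix_of_prefix (List.prefix_append p r) hp'b with hle | hle
  · exact hp'.2 p hle hp.1
  · exact (hp.2 p' hle hp'.1).symm

theorem Dominates.exists_minimallyDominates_append (h : Dominates b a) :
    ∃ p r, b = p ++ r ∧ MinimallyDominates p a := by
  classical
  have hex : ∃ k, Dominates (b.take k) a := ⟨b.length, by rwa [List.take_length]⟩
  refine ⟨b.take (Nat.find hex), b.drop (Nat.find hex), (List.take_append_drop _ _).symm,
    Nat.find_spec hex, fun q hq hqa => hq.eq_of_length (le_antisymm hq.length_le ?_)⟩
  have hqb : q = b.take q.length := List.prefix_iff_eq_take.1 (hq.trans (List.take_prefix _ _))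
  have hfind : Nat.find hex ≤ q.length := Nat.find_min' hex (by rwa [← hqb])
  simp only [List.length_take]
  omega

theorem dominates_append_iff :
    Dominates b (a ++ t) ↔ ∃ p r, b = p ++ r ∧ MinimallyDominates p a ∧ Dominates r t := by
  constructor
  · intro h
    obtain ⟨b₁, b₂, rfl, h₁, h₂⟩ := h.exists_append_eq
    obtain ⟨p, r, rfl, hp⟩ := h₁.exists_minimallyDominates_append
    exact ⟨p, r ++ b₂, List.append_assoc p r b₂, hp, h₂.mono (List.sublist_append_right r b₂)⟩
  · rintro ⟨p, r, rfl, hp, hr⟩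
    exact hp.1.append hr

end Dominates

section Counting

def compositions (n : ℕ) : Finset (List ℕ) :=
  univ.image fun c : Composition n => c.blocks

theorem mem_compositions {n : ℕ} {l : List ℕ} : l ∈ compositions n ↔ IsComposition n l := by
  simp only [compositions, mem_image, mem_univ, true_and]
  constructor
  · rintro ⟨c, rfl⟩
    exact ⟨fun x hx => c.blocks_pos hx, c.blocks_sum⟩
  · rintro ⟨hpos, hsum⟩
    exact ⟨⟨l, fun hx => hpos _ hx, hsum⟩, rfl⟩

theorem IsComposition.append {m n : ℕ} {p r : List ℕ} (hp : IsComposition m p)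
    (hr : IsComposition n r) : IsComposition (m + n) (p ++ r) :=
  ⟨fun x hx => (List.mem_append.1 hx).elim (hp.1 x) (hr.1 x), by rw [List.sum_append, hp.2, hr.2]⟩

theorem IsComposition.of_append {n : ℕ} {p r : List ℕ} (h : IsComposition n (p ++ r)) :
    IsComposition p.sum p ∧ IsComposition r.sum r :=
  ⟨⟨fun x hx => h.1 x (List.mem_append_left r hx), rfl⟩,
    ⟨fun x hx => h.1 x (List.mem_append_right p hx), rfl⟩⟩

theorem finite_setOf_isComposition (n : ℕ) (R : List ℕ → Prop) :
    {b | IsComposition n b ∧ R b}.Finite :=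
  (compositions n).finite_toSet.subset fun _ hb => mem_compositions.2 hb.1

open scoped Classical in
theorem ncard_setOf_isComposition (n : ℕ) (R : List ℕ → Prop) :
    {b | IsComposition n b ∧ R b}.ncard = #{b ∈ compositions n | R b} := by
  rw [← Set.ncard_coe_finset]
  congr 1
  ext b
  simp [mem_compositions]

theorem ncard_append_eq_sum_antidiagonal {P Q : List ℕ → Prop}
    (hP : ∀ {p p' r r'}, P p → P p' → p ++ r = p' ++ r' → p = p') (n : ℕ) :
    {b | IsComposition n b ∧ ∃ p r, b = p ++ r ∧ P p ∧ Q r}.ncard =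
      ∑ x ∈ antidiagonal n,
        {p | IsComposition x.1 p ∧ P p}.ncard * {r | IsComposition x.2 r ∧ Q r}.ncard := by
  classical
  simp only [ncard_setOf_isComposition, ← card_product]
  rw [← card_sigma]
  symm
  refine card_bij (fun y _ => y.2.1 ++ y.2.2) ?_ ?_ ?_
  · rintro ⟨x, p, r⟩ hy
    simp only [mem_sigma, HasAntidiagonal.mem_antidiagonal, mem_product, mem_filter,
      mem_compositions] at hy ⊢
    obtain ⟨rfl, ⟨hp, hP⟩, hr, hQ⟩ := hy
    exact ⟨hp.append hr, p, r, rfl, hP, hQ⟩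
  · rintro ⟨x, p, r⟩ hy ⟨x', p', r'⟩ hy' heq
    simp only [mem_sigma, mem_product, mem_filter, mem_compositions] at hy hy' heq
    obtain ⟨-, ⟨⟨-, hp⟩, hP₁⟩, ⟨-, hr⟩, -⟩ := hy
    obtain ⟨-, ⟨⟨-, hp'⟩, hP₁'⟩, ⟨-, hr'⟩, -⟩ := hy'
    obtain rfl := hP hP₁ hP₁' heq
    obtain rfl := List.append_cancel_left heq
    obtain rfl : x = x' := Prod.ext (hp.symm.trans hp') (hr.symm.trans hr')
    rfl
  · intro b hb
    simp only [mem_filter, mem_compositions] at hb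
    obtain ⟨hb, p, r, rfl, hP, hQ⟩ := hb
    obtain ⟨hp, hr⟩ := hb.of_append
    refine ⟨⟨(p.sum, r.sum), p, r⟩, ?_, rfl⟩
    simp only [mem_sigma, HasAntidiagonal.mem_antidiagonal, mem_product, mem_filter,
      mem_compositions]
    exact ⟨by rw [← hb.2, List.sum_append], ⟨hp, hP⟩, hr, hQ⟩

theorem ncard_domSet_append (n : ℕ) (a t : List ℕ) :
    (domSet n (a ++ t)).ncard =
      ∑ x ∈ antidiagonal n, (minDomSet x.1 a).ncard * (domSet x.2 t).ncard := by
  simp only [domSet, minDomSet, dominates_append_iff]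
  exact ncard_append_eq_sum_antidiagonal (fun hp hp' h => hp.eq_of_append_eq hp' h) n

theorem ncard_domSet_singleton_of_lt {j s : ℕ} (hj : j < s) : (domSet j [s]).ncard = 0 := by
  rw [Set.ncard_eq_zero (s := domSet j [s]) (finite_setOf_isComposition j _),
    Set.eq_empty_iff_forall_notMem]
  rintro b ⟨hb, hdom⟩
  obtain ⟨y, hy, hsy⟩ := dominates_singleton_iff.1 hdom
  have : y ≤ j := hb.2 ▸ List.le_sum_of_mem hy
  omega

theorem ncard_domSet_singleton_self_pos {s : ℕ} (hs : 0 < s) : 0 < (domSet s [s]).ncard :=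
  (Set.ncard_pos (finite_setOf_isComposition s _)).2
    ⟨[s], ⟨by simpa using hs, by simp⟩, dominates_self [s]⟩

end Counting

theorem eq_of_sum_antidiagonal_mul_eq {f g h : ℕ → ℕ} {s : ℕ} (hlt : ∀ j < s, h j = 0)
    (hs : 0 < h s) (hfg : ∀ n, s ≤ n →
      ∑ x ∈ antidiagonal n, f x.1 * h x.2 = ∑ x ∈ antidiagonal n, g x.1 * h x.2) :
    f = g := by
  have hsplit : ∀ (F : ℕ → ℕ) k, ∑ x ∈ antidiagonal (k + s), F x.1 * h x.2 =
      ∑ i ∈ range k, F i * h (k + s - i) + F k * h s := by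
    intro F k
    rw [Nat.sum_antidiagonal_eq_sum_range_succ fun i j => F i * h j,
      ← sum_subset (range_subset_range.2 (by omega : k + 1 ≤ (k + s).succ)), sum_range_succ,
      Nat.add_sub_cancel_left]
    intro i hi hik
    rw [mem_range] at hi hik
    rw [hlt (k + s - i) (by omega), mul_zero]
  funext k
  induction k using Nat.strong_induction_on with
  | _ k ih =>
    have hk := hfg (k + s) (by omega)
    rw [hsplit, hsplit, sum_congr rfl fun i hi => by rw [ih i (mem_range.1 hi)]] at hk
    exact Nat.eq_of_mul_eq_mul_right hs (by omega)

theorem domEquiv_of_append_general (a a' : List ℕ) (s : ℕ) (hs : 0 < s)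
    (h : ∀ n : ℕ, 0 < n →
      (domSet n (a ++ [s])).ncard = (domSet n (a' ++ [s])).ncard) :
    ∀ n : ℕ, 0 < n → (domSet n a).ncard = (domSet n a').ncard := by
  have hmin : ∀ k, (minDomSet k a).ncard = (minDomSet k a').ncard :=
    congrFun <| eq_of_sum_antidiagonal_mul_eq (h := fun j => (domSet j [s]).ncard)
      (fun _ hj => ncard_domSet_singleton_of_lt hj) (ncard_domSet_singleton_self_pos hs)
      fun n hn => by
        rw [← ncard_domSet_append, ← ncard_domSet_append]
        exact h n (by omega)
  intro n _
  rw [← a.append_nil, ← a'.append_nil, ncard_domSet_append, ncard_domSet_append]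
  simp only [hmin]

theorem domEquiv_of_append (a a' : List ℕ)
    (ha : ∀ x ∈ a, 0 < x) (ha' : ∀ x ∈ a', 0 < x)
    (hane : a ≠ []) (ha'ne : a' ≠ []) (s : ℕ) (hs : 0 < s)
    (h : ∀ n : ℕ, 0 < n →
      (domSet n (a ++ [s])).ncard = (domSet n (a' ++ [s])).ncard) :
    ∀ n : ℕ, 0 < n → (domSet n a).ncard = (domSet n a').ncard :=
  domEquiv_of_append_general a a' s hs h
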